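/- arXiv:1611.10133 — 2 statements merged into one kernel-verified Lean document; each statement's English description precedes it below -/
import Mathlib

section
/- Let F be a finite family of subsets of a finite set X, let d ≥ 1 and let m ≥ 0 be an integer threshold. Call a subfamily A ⊆ F good if there do not exist i with 1 ≤ i ≤ d and sets A_1, ..., A_i ∈ F \ A such that |(A_1 ∪ ... ∪ A_i) \ (⋃A)| < i·m. Then there exists a good subfamily A ⊆ F with |⋃A| ≤ |A|·m. -/
/-!
Take a subfamily `A ⊆ F` of maximal size among those with `|⋃A| ≤ |A|·m`. A violating
collection `B ⊆ F \ A` adds fewer than `|B|·m` new points, so `A ∪ B` still satisfies the bound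
and is strictly larger, contradicting maximality.
-/

open Finset

theorem card_sup_union_le_of_card_sdiff_le {X : Type*} [DecidableEq X]
    {A B : Finset (Finset X)} {m : ℕ}
    (hAB : Disjoint A B) (hA : #(A.sup id) ≤ #A * m) (hB : #(B.sup id \ A.sup id) ≤ #B * m) :
    #((A ∪ B).sup id) ≤ #(A ∪ B) * m := by
  rw [sup_union, sup_eq_union, card_union_of_disjoint hAB, add_mul,
    ← union_sdiff_self_eq_union]
  exact (card_union_le _ _).trans (add_le_add hA hB)

theorem stmt_4_general {X : Type*} [DecidableEq X]
    (F : Finset (Finset X)) (d m : ℕ) :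
    ∃ A ⊆ F,
      (¬ ∃ B ⊆ F \ A, B.Nonempty ∧ B.card ≤ d ∧
          ((B.sup id) \ (A.sup id)).card < B.card * m) ∧
      (A.sup id).card ≤ A.card * m := by
  obtain ⟨A, hA, hmax⟩ := exists_max_image
    {A ∈ F.powerset | #(A.sup id) ≤ #A * m} card ⟨∅, by simp⟩
  obtain ⟨hAF, hAm⟩ := by simpa only [mem_filter, mem_powerset] using hA
  refine ⟨A, hAF, ?_, hAm⟩
  rintro ⟨B, hBF, hBne, -, hBm⟩
  have hAB : Disjoint A B := disjoint_of_subset_right hBF disjoint_sdiff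
  have hABm := card_sup_union_le_of_card_sdiff_le hAB hAm hBm.le
  have hle := hmax (A ∪ B) (by
    simpa only [mem_filter, mem_powerset] using
      ⟨union_subset hAF (hBF.trans sdiff_subset), hABm⟩)
  rw [card_union_of_disjoint hAB] at hle
  have := hBne.card_pos
  omega

theorem stmt_4 {X : Type*} [DecidableEq X] [Fintype X]
    (F : Finset (Finset X)) (d m : ℕ) (hd : 1 ≤ d) :
    ∃ A ⊆ F,
      (¬ ∃ B ⊆ F \ A, B.Nonempty ∧ B.card ≤ d ∧
          ((B.sup id) \ (A.sup id)).card < B.card * m) ∧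
      (A.sup id).card ≤ A.card * m :=
  stmt_4_general F d m
end

section
/- Let n ≥ 1. Suppose F = {F_1, ..., F_k} is a family of subsets of [n] = {1,...,n} with the following property: there exists a function g from {0,1}^k to [n] ∪ {⊥} such that for every subset S ⊆ [n], letting a(S) ∈ {0,1}^k be defined by a(S)_j = 1 iff F_j ∩ S ≠ ∅, we have g(a(S)) ∈ S whenever S ≠ ∅, and g(a(S)) = ⊥ iff S = ∅. Then k ≥ n. -/
/-!
If the answers to the queries determine an excellent element `x` of a nonempty `S`, they must
distinguish `S` from `S \ {x}`, so some query meets `S` exactly in `x`. Removing such an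
isolated element one at a time shows that a set `T` meets at least `|T|` of the queries.
-/

namespace Finset

variable {ι α : Type*} [DecidableEq α]

theorem card_le_card_filter_inter_nonempty [Fintype ι] (F : ι → Finset α) (T : Finset α)
    (hisol : ∀ S ⊆ T, S.Nonempty → ∃ j x, F j ∩ S = {x}) :
    #T ≤ #{j | (F j ∩ T).Nonempty} := by
  induction T using Finset.strongInduction with
  | H T ih =>
    obtain rfl | hT := T.eq_empty_or_nonempty
    · simp
    obtain ⟨j, x, hjx⟩ := hisol T subset_rfl hT
    have hxT : x ∈ T := mem_of_mem_inter_right (hjx ▸ mem_singleton_self x)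
    have hsub : T.erase x ⊆ T := erase_subset x T
    have hmono : ({i | (F i ∩ T.erase x).Nonempty} : Finset ι) ⊂
        ({i | (F i ∩ T).Nonempty} : Finset ι) := by
      refine ssubset_iff_of_subset (fun i => ?_) |>.2 ⟨j, ?_, ?_⟩
      · simpa using fun h : (F i ∩ T.erase x).Nonempty => h.mono (inter_subset_inter_left hsub)
      · simp [hjx]
      · simp [inter_erase, hjx]
    calc #T = #(T.erase x) + 1 := (card_erase_add_one hxT).symm
      _ ≤ #{i | (F i ∩ T.erase x).Nonempty} + 1 :=
          Nat.add_le_add_right (ih _ (erase_ssubset hxT) fun S hS => hisol S (hS.trans hsub)) 1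
      _ ≤ #{i | (F i ∩ T).Nonempty} := card_lt_card hmono

def hitPattern (F : ι → Finset α) (S : Finset α) : ι → Bool :=
  fun j => decide ((F j ∩ S).Nonempty)

theorem exists_inter_eq_singleton_of_decoder (F : ι → Finset α)
    (g : (ι → Bool) → Option α)
    (hsome : ∀ S : Finset α, S.Nonempty → ∃ x ∈ S, g (hitPattern F S) = some x)
    (hnone : g (hitPattern F ∅) = none) (S : Finset α) (hS : S.Nonempty) :
    ∃ j x, F j ∩ S = {x} := by
  obtain ⟨x, hxS, hgx⟩ := hsome S hS
  have hdiff : hitPattern F S ≠ hitPattern F (S.erase x) := by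
    intro h
    rw [h] at hgx
    obtain he | hne := (S.erase x).eq_empty_or_nonempty
    · simp [he, hnone] at hgx
    · obtain ⟨y, hy, hgy⟩ := hsome _ hne
      rw [hgx, Option.some_inj] at hgy
      exact notMem_erase x S (hgy ▸ hy)
  obtain ⟨j, hj⟩ := Function.ne_iff.mp hdiff
  have hmeets : (F j ∩ S).Nonempty := by
    by_contra h
    have h' : ¬(F j ∩ S.erase x).Nonempty := fun h' =>
      h (h'.mono (inter_subset_inter_left (erase_subset x S)))
    simp [hitPattern, h, h'] at hj
  have hmisses : (F j ∩ S).erase x = ∅ := by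
    rw [← inter_erase]
    by_contra h
    simp [hitPattern, hmeets, nonempty_iff_ne_empty.mpr h] at hj
  obtain h | h := erase_eq_empty_iff _ x |>.1 hmisses
  · exact absurd h hmeets.ne_empty
  · exact ⟨j, x, h⟩

end Finset

theorem stmt_7_general (n k : ℕ)
    (F : Fin k → Finset (Fin n))
    (g : (Fin k → Bool) → Option (Fin n))
    (hg : ∀ S : Finset (Fin n),
      (S.Nonempty → ∃ x ∈ S, g (fun j => decide ((F j ∩ S).Nonempty)) = some x) ∧
      (g (fun j => decide ((F j ∩ S).Nonempty)) = none ↔ S = ∅)) :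
    n ≤ k := by
  calc n = (Finset.univ : Finset (Fin n)).card := (Finset.card_fin n).symm
    _ ≤ (Finset.univ.filter fun j => (F j ∩ Finset.univ).Nonempty).card :=
        Finset.card_le_card_filter_inter_nonempty F _ fun S _ =>
          Finset.exists_inter_eq_singleton_of_decoder F g (fun S => (hg S).1) ((hg ∅).2.2 rfl) S
    _ ≤ k := Finset.card_le_univ _ |>.trans_eq (Fintype.card_fin k)

theorem stmt_7 (n k : ℕ) (hn : 1 ≤ n)
    (F : Fin k → Finset (Fin n))
    (g : (Fin k → Bool) → Option (Fin n))
    (hg : ∀ S : Finset (Fin n),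
      (S.Nonempty → ∃ x ∈ S, g (fun j => decide ((F j ∩ S).Nonempty)) = some x) ∧
      (g (fun j => decide ((F j ∩ S).Nonempty)) = none ↔ S = ∅)) :
    n ≤ k :=
  stmt_7_general n k F g hg
end
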